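/- arXiv:1611.10275 — 2 statements merged into one kernel-verified Lean document; each statement's English description precedes it below -/
import Mathlib

section
/- There is an absolute constant c > 0 such that the following holds. (a) For every (x,t) ∈ ℝ² with |x| ≤ (1/10)·R^{1/2}N^{-1} and |t| ≤ (1/10)·R·N^{-2}, one has |Ef(x,t)| ≥ c · N · R^{-1/2}. (b) Consequently, for every p ∈ [2,6] there is a constant c_p > 0, depending only on p, such that ‖Ef‖_{L^p(B_R)} ≥ c_p · R^{3/(2p) - 1/2} · N^{1 - 3/p}. -/
open MeasureTheory Real Set ENNReal

set_option maxHeartbeats 1000000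

noncomputable section

/-- The extension operator: `Ef(x,t) = ∫_{[-1,1]} e^{i(ω²t + ωx)} f(ω) dω`,
viewed as a function on `ℝ × ℝ` with `z = (x, t)`. -/
def extOp (f : ℝ → ℂ) : ℝ × ℝ → ℂ := fun z =>
  ∫ ω in Icc (-1 : ℝ) 1, Complex.exp (Complex.I * ((ω ^ 2 * z.2 + ω * z.1 : ℝ) : ℂ)) * f ω

/-- The `L²` norm of a function on `ℝ`. -/
def L2norm (f : ℝ → ℂ) : ℝ := (eLpNorm f 2 volume).toReal

/-- The `Lᵖ` norm over the ball of radius `R` centered at the origin of `ℝ²`. -/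
def LpBall (g : ℝ × ℝ → ℂ) (p R : ℝ) : ℝ≥0∞ :=
  eLpNorm g (ENNReal.ofReal p) (volume.restrict (Metric.ball (0 : ℝ × ℝ) R))

/-- The star-scenario profile: a smooth `f : ℝ → ℝ` with `0 ≤ f ≤ 1`, `f = 1` on
`[-(N+1/2)R^{-1/2}, (N+1/2)R^{-1/2}]`, supported in
`[-(N+1)R^{-1/2}, (N+1)R^{-1/2}]`. -/
def IsStarFn (R : ℝ) (N : ℕ) (f : ℝ → ℝ) : Prop :=
  ContDiff ℝ (⊤ : ℕ∞) f ∧ (∀ ω, 0 ≤ f ω ∧ f ω ≤ 1) ∧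
    (∀ ω : ℝ, |ω| ≤ ((N : ℝ) + 1 / 2) * R ^ (-(1 : ℝ) / 2) → f ω = 1) ∧
    Function.support f ⊆
      Icc (-(((N : ℝ) + 1) * R ^ (-(1 : ℝ) / 2))) (((N : ℝ) + 1) * R ^ (-(1 : ℝ) / 2))

lemma star_lower (R : ℝ) (hR : 1 ≤ R) (N : ℕ) (hN : 0 < N) (hNR : (N:ℝ) < R ^ ((1:ℝ)/2))
    (f : ℝ → ℝ) (hf : IsStarFn R N f) (x t : ℝ)
    (hx : |x| ≤ 1/10 * R ^ ((1:ℝ)/2) * (N:ℝ)⁻¹) (ht : |t| ≤ 1/10 * R * ((N:ℝ)^2)⁻¹) :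
    (N:ℝ) * R ^ (-(1:ℝ)/2) ≤ ‖extOp (fun ω => (f ω : ℂ)) (x, t)‖ := by
  obtain ⟨hsm, hbd, hone, hsupp⟩ := hf
  have hR0 : (0:ℝ) < R := lt_of_lt_of_le one_pos hR
  have hN0 : (0:ℝ) < N := Nat.cast_pos.mpr hN
  have hN1 : (1:ℝ) ≤ N := Nat.one_le_cast.mpr hN
  set u : ℝ := R ^ ((1:ℝ)/2) with hu_def
  have hu : (0:ℝ) < u := Real.rpow_pos_of_pos hR0 _
  have huu : u * u = R := by
    rw [hu_def, ← Real.rpow_add hR0]; norm_num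
  have hinv : R ^ (-(1:ℝ)/2) = u⁻¹ := by
    rw [hu_def, ← Real.rpow_neg hR0.le]; norm_num
  set s : ℝ := (N:ℝ) * R ^ (-(1:ℝ)/2) with hs_def
  have hs0 : 0 < s := by rw [hs_def, hinv]; positivity
  have hs1 : s < 1 := by
    rw [hs_def, hinv]
    have := (div_lt_one hu).mpr hNR
    rwa [div_eq_mul_inv] at this
  -- phase bound on the support
  have hphase : ∀ ω : ℝ, |ω| ≤ ((N:ℝ)+1) * R ^ (-(1:ℝ)/2) → |ω^2*t + ω*x| ≤ 3/5 := by
    intro ω hω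
    rw [hinv] at hω
    have habs : |ω^2*t + ω*x| ≤ |ω|^2 * |t| + |ω| * |x| := by
      calc |ω^2*t + ω*x| ≤ |ω^2*t| + |ω*x| := abs_add_le _ _
        _ = |ω|^2 * |t| + |ω| * |x| := by rw [abs_mul, abs_mul, abs_pow]
    have h2 : |t| ≤ 1/10 * (u*u) * ((N:ℝ)^2)⁻¹ := by rw [huu]; exact ht
    have h3 : |x| ≤ 1/10 * u * (N:ℝ)⁻¹ := hx
    have e1 : |ω|^2 * |t| ≤ (((N:ℝ)+1) * u⁻¹)^2 * (1/10 * (u*u) * ((N:ℝ)^2)⁻¹) := by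
      apply mul_le_mul _ h2 (abs_nonneg t) (by positivity)
      exact pow_le_pow_left₀ (abs_nonneg ω) hω 2
    have huu1 : u⁻¹ * u = 1 := inv_mul_cancel₀ hu.ne'
    have e1' : (((N:ℝ)+1) * u⁻¹)^2 * (1/10 * (u*u) * ((N:ℝ)^2)⁻¹)
        = ((N:ℝ)+1)^2 / (N:ℝ)^2 / 10 * ((u⁻¹*u) * (u⁻¹*u)) := by
      rw [div_div, div_eq_mul_inv]; ring
    rw [huu1, mul_one, mul_one] at e1'
    have e2 : |ω| * |x| ≤ (((N:ℝ)+1) * u⁻¹) * (1/10 * u * (N:ℝ)⁻¹) :=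
      mul_le_mul hω h3 (abs_nonneg x) (by positivity)
    have e2' : (((N:ℝ)+1) * u⁻¹) * (1/10 * u * (N:ℝ)⁻¹) = ((N:ℝ)+1) / (N:ℝ) / 10 * (u⁻¹*u) := by
      rw [div_div, div_eq_mul_inv]; ring
    rw [huu1, mul_one] at e2'
    have hq1 : ((N:ℝ)+1) / (N:ℝ) ≤ 2 := by
      rw [div_le_iff₀ hN0]; linarith
    have hq2 : ((N:ℝ)+1)^2 / (N:ℝ)^2 ≤ 4 := by
      rw [div_le_iff₀ (by positivity)]; nlinarith
    rw [e1'] at e1; rw [e2'] at e2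
    linarith
  have hcos : ∀ θ:ℝ, |θ| ≤ 3/5 → (1/2:ℝ) ≤ Real.cos θ := by
    intro θ hθ
    have h1 := Real.one_sub_sq_div_two_le_cos (x := θ)
    have h2 : θ^2 ≤ (3/5)^2 := by
      rw [← sq_abs]; exact pow_le_pow_left₀ (abs_nonneg θ) hθ 2
    nlinarith
  set g : ℝ → ℝ := fun ω => Real.cos (ω^2*t + ω*x) * f ω with hg_def
  have hfc : Continuous f := hsm.continuous
  have hgc : Continuous g := by
    apply Continuous.mul _ hfc
    exact Real.continuous_cos.comp (by fun_prop)
  have hic : Continuous (fun ω : ℝ => Complex.exp (Complex.I * ((ω ^ 2 * t + ω * x : ℝ) : ℂ)) * ((f ω : ℝ) : ℂ)) := by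
    apply Continuous.mul _ (Complex.continuous_ofReal.comp hfc)
    exact Complex.continuous_exp.comp (continuous_const.mul (Complex.continuous_ofReal.comp (by fun_prop)))
  have hint : IntegrableOn (fun ω : ℝ => Complex.exp (Complex.I * ((ω ^ 2 * t + ω * x : ℝ) : ℂ)) * ((f ω : ℝ) : ℂ)) (Icc (-1:ℝ) 1) volume := hic.integrableOn_Icc
  have hre : ∫ ω in Icc (-1:ℝ) 1, g ω = (extOp (fun ω => (f ω : ℂ)) (x, t)).re := by
    show _ = (∫ ω in Icc (-1 : ℝ) 1, Complex.exp (Complex.I * ((ω ^ 2 * t + ω * x : ℝ) : ℂ)) * (f ω : ℂ)).re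
    rw [← RCLike.re_to_complex, ← integral_re hint]
    refine integral_congr_ae (Filter.Eventually.of_forall fun ω => ?_)
    show Real.cos (ω^2*t + ω*x) * f ω
      = RCLike.re (Complex.exp (Complex.I * ((ω^2*t + ω*x : ℝ):ℂ)) * ((f ω : ℝ):ℂ))
    simp only [RCLike.re_to_complex]
    rw [mul_comm Complex.I, Complex.mul_re, Complex.ofReal_re, Complex.ofReal_im,
        Complex.exp_ofReal_mul_I_re]
    ring
  have hg0 : ∀ ω, 0 ≤ g ω := by
    intro ω
    by_cases h : f ω = 0
    · simp [hg_def, h]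
    · have hωsup := hsupp (Function.mem_support.mpr h)
      have habs : |ω| ≤ ((N:ℝ)+1) * R ^ (-(1:ℝ)/2) := abs_le.mpr ⟨hωsup.1, hωsup.2⟩
      have hc := hcos _ (hphase ω habs)
      have hb := (hbd ω).1
      rw [hg_def]
      positivity
  have hsub1 : Icc (-s) s ⊆ Icc (-1:ℝ) 1 := Icc_subset_Icc (by linarith) (by linarith)
  have hmono : ∫ ω in Icc (-s) s, g ω ≤ ∫ ω in Icc (-1:ℝ) 1, g ω := by
    apply setIntegral_mono_set hgc.integrableOn_Icc
      (Filter.Eventually.of_forall hg0) (HasSubset.Subset.eventuallyLE hsub1)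
  have hlow : (1/2 : ℝ) * (volume (Icc (-s) s)).toReal ≤ ∫ ω in Icc (-s) s, g ω := by
    apply setIntegral_ge_of_const_le_real measurableSet_Icc measure_Icc_lt_top.ne _ hgc.integrableOn_Icc
    intro ω hω
    have hωs : |ω| ≤ s := abs_le.mpr ⟨hω.1, hω.2⟩
    have hRinv0 : (0:ℝ) ≤ R ^ (-(1:ℝ)/2) := by rw [hinv]; positivity
    have hf1 : f ω = 1 := hone ω (le_trans hωs (by rw [hs_def]; nlinarith))
    have habs : |ω| ≤ ((N:ℝ)+1) * R ^ (-(1:ℝ)/2) := le_trans hωs (by rw [hs_def]; nlinarith)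
    simp only [hf1, mul_one]
    exact hcos _ (hphase ω habs)
  have hvol : (volume (Icc (-s) s)).toReal = 2*s := by
    rw [Real.volume_Icc, ENNReal.toReal_ofReal (by linarith)]; ring
  have : s ≤ ∫ ω in Icc (-1:ℝ) 1, g ω := by
    rw [hvol] at hlow; linarith
  rw [hre] at this
  calc (N:ℝ) * R ^ (-(1:ℝ)/2) = s := rfl
    _ ≤ (extOp (fun ω => (f ω : ℂ)) (x, t)).re := this
    _ ≤ ‖extOp (fun ω => (f ω : ℂ)) (x, t)‖ := by
        exact Complex.re_le_norm _

/-- **Star scenario lower bounds**: (a) there is an absolute constant `c > 0` such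
that `|Ef(x,t)| ≥ c·N·R^{-1/2}` whenever `|x| ≤ (1/10)R^{1/2}N⁻¹` and
`|t| ≤ (1/10)R·N⁻²`; (b) consequently, for every `p ∈ [2,6]` there is `c_p > 0`,
depending only on `p`, with `‖Ef‖_{L^p(B_R)} ≥ c_p · R^{3/(2p) - 1/2} · N^{1 - 3/p}`. -/
theorem star_scenario :
    (∃ c : ℝ, 0 < c ∧ ∀ R : ℝ, 1 ≤ R → ∀ N : ℕ, 0 < N → (N : ℝ) < R ^ ((1 : ℝ) / 2) →
      ∀ f : ℝ → ℝ, IsStarFn R N f → ∀ x t : ℝ,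
        |x| ≤ 1 / 10 * R ^ ((1 : ℝ) / 2) * (N : ℝ)⁻¹ → |t| ≤ 1 / 10 * R * ((N : ℝ) ^ 2)⁻¹ →
        c * N * R ^ (-(1 : ℝ) / 2) ≤ ‖extOp (fun ω => (f ω : ℂ)) (x, t)‖) ∧
    (∀ p : ℝ, 2 ≤ p → p ≤ 6 → ∃ cp : ℝ, 0 < cp ∧
      ∀ R : ℝ, 1 ≤ R → ∀ N : ℕ, 0 < N → (N : ℝ) < R ^ ((1 : ℝ) / 2) →
      ∀ f : ℝ → ℝ, IsStarFn R N f →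
        ENNReal.ofReal (cp * R ^ (3 / (2 * p) - 1 / 2) * (N : ℝ) ^ (1 - 3 / p)) ≤
          LpBall (extOp (fun ω => (f ω : ℂ))) p R) := by
  constructor
  · refine ⟨1, one_pos, fun R hR N hN hNR f hf x t hx ht => ?_⟩
    rw [one_mul]
    exact star_lower R hR N hN hNR f hf x t hx ht
  · intro p hp2 hp6
    have hp0 : (0:ℝ) < p := by linarith
    refine ⟨(25:ℝ)⁻¹ ^ p⁻¹, by positivity, ?_⟩
    intro R hR N hN hNR f hf
    have hR0 : (0:ℝ) < R := lt_of_lt_of_le one_pos hR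
    have hN0 : (0:ℝ) < N := Nat.cast_pos.mpr hN
    have hN1 : (1:ℝ) ≤ N := Nat.one_le_cast.mpr hN
    have hu : (0:ℝ) < R ^ ((1:ℝ)/2) := Real.rpow_pos_of_pos hR0 _
    set a : ℝ := 1/10 * R ^ ((1:ℝ)/2) * (N:ℝ)⁻¹ with ha_def
    set b : ℝ := 1/10 * R * ((N:ℝ)^2)⁻¹ with hb_def
    have ha0 : 0 < a := by positivity
    have hb0 : 0 < b := by positivity
    set S : Set (ℝ × ℝ) := Icc (-a) a ×ˢ Icc (-b) b with hS_def
    have hSmeas : MeasurableSet S := measurableSet_Icc.prod measurableSet_Icc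
    have hRhalf : R ^ ((1:ℝ)/2) ≤ R := by
      nth_rewrite 2 [← Real.rpow_one R]
      exact Real.rpow_le_rpow_of_exponent_le hR (by norm_num)
    have hNinv : (N:ℝ)⁻¹ ≤ 1 := by
      rw [inv_le_one_iff₀]; right; exact hN1
    have hN2inv : ((N:ℝ)^2)⁻¹ ≤ 1 := by
      rw [inv_le_one_iff₀]; right; nlinarith
    have haR : a < R := by
      rw [ha_def]; nlinarith
    have hbR : b < R := by
      rw [hb_def]; nlinarith
    have hsub : S ⊆ Metric.ball (0 : ℝ×ℝ) R := by
      rintro ⟨z1, z2⟩ ⟨hz1, hz2⟩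
      simp only [Metric.mem_ball, Prod.dist_eq, Prod.fst_zero, Prod.snd_zero, Real.dist_eq,
        sub_zero]
      apply max_lt
      · exact lt_of_le_of_lt (abs_le.mpr ⟨hz1.1, hz1.2⟩) haR
      · exact lt_of_le_of_lt (abs_le.mpr ⟨hz2.1, hz2.2⟩) hbR
    set c0 : ℝ := (N:ℝ) * R ^ (-(1:ℝ)/2) with hc0_def
    have hc0' : (0:ℝ) < R ^ (-(1:ℝ)/2) := Real.rpow_pos_of_pos hR0 _
    have hc00 : 0 < c0 := by rw [hc0_def]; positivity
    set V : ℝ := (2*a) * (2*b) with hV_def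
    have hV0 : 0 < V := by positivity
    have hvolS : volume S = ENNReal.ofReal V := by
      rw [hS_def, Measure.volume_eq_prod, Measure.prod_prod, Real.volume_Icc, Real.volume_Icc,
          ← ENNReal.ofReal_mul (by linarith)]
      congr 1
      rw [hV_def]; ring
    have hμ0 : volume.restrict S ≠ 0 := by
      rw [Ne, Measure.restrict_eq_zero, hvolS]
      exact (ENNReal.ofReal_pos.mpr hV0).ne'
    have hp_ne : (ENNReal.ofReal p) ≠ 0 := by
      rw [Ne, ENNReal.ofReal_eq_zero]; push_neg; linarith
    have hconst := eLpNorm_const (μ := volume.restrict S) (p := ENNReal.ofReal p)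
      ((c0 : ℂ)) hp_ne hμ0
    rw [Measure.restrict_apply_univ, hvolS, ENNReal.toReal_ofReal hp0.le] at hconst
    have hlogV : Real.log V = Real.log (25:ℝ)⁻¹ + (3/2) * Real.log R - 3 * Real.log (N:ℝ) := by
      have hV' : V = (25:ℝ)⁻¹ * (R ^ ((1:ℝ)/2) * R) * ((N:ℝ) * (N:ℝ)^2)⁻¹ := by
        rw [hV_def, ha_def, hb_def, mul_inv]; ring
      have l1 : Real.log ((N:ℝ) * (N:ℝ)^2) = 3 * Real.log (N:ℝ) := by
        rw [Real.log_mul hN0.ne' (by positivity), Real.log_pow]; push_cast; ring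
      rw [hV', Real.log_mul (by positivity) (by positivity),
          Real.log_mul (by positivity) (by positivity),
          Real.log_inv, Real.log_inv, l1,
          Real.log_mul (by positivity) hR0.ne', Real.log_rpow hR0]
      ring
    have hkey : (25:ℝ)⁻¹ ^ p⁻¹ * R ^ (3/(2*p) - 1/2) * (N:ℝ) ^ (1 - 3/p) = c0 * V ^ p⁻¹ := by
      have h1 : (0:ℝ) < (25:ℝ)⁻¹ ^ p⁻¹ * R ^ (3/(2*p) - 1/2) * (N:ℝ) ^ (1 - 3/p) := by positivity
      have h2 : (0:ℝ) < c0 * V ^ p⁻¹ := by positivity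
      rw [← Real.exp_log h1, ← Real.exp_log h2]
      congr 1
      rw [Real.log_mul (by positivity) (by positivity),
          Real.log_mul (by positivity) (by positivity),
          Real.log_mul (by positivity) (by positivity),
          Real.log_rpow (by norm_num : (0:ℝ) < (25:ℝ)⁻¹), Real.log_rpow hR0,
          Real.log_rpow hN0, Real.log_rpow hV0, hlogV, hc0_def,
          Real.log_mul (by positivity) (by positivity), Real.log_rpow hR0]
      field_simp
      ring
    unfold LpBall
    calc ENNReal.ofReal ((25:ℝ)⁻¹ ^ p⁻¹ * R ^ (3/(2*p) - 1/2) * (N:ℝ) ^ (1 - 3/p))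
        = ENNReal.ofReal (c0 * V ^ p⁻¹) := by rw [hkey]
      _ = ENNReal.ofReal c0 * ENNReal.ofReal (V ^ p⁻¹) := ENNReal.ofReal_mul hc00.le
      _ = (‖(c0:ℂ)‖₊ : ℝ≥0∞) * (ENNReal.ofReal V) ^ (1/p) := by
          rw [← ENNReal.ofReal_rpow_of_pos hV0, one_div]
          congr 1
          rw [← enorm_eq_nnnorm, ← ofReal_norm_eq_enorm, Complex.norm_real, Real.norm_of_nonneg hc00.le]
      _ = eLpNorm (fun _ : ℝ×ℝ => (c0:ℂ)) (ENNReal.ofReal p) (volume.restrict S) := hconst.symm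
      _ ≤ eLpNorm (extOp (fun ω => (f ω : ℂ))) (ENNReal.ofReal p) (volume.restrict S) := by
          apply eLpNorm_mono_ae
          filter_upwards [ae_restrict_mem hSmeas] with z hz
          obtain ⟨hz1, hz2⟩ := hz
          have hbnd := star_lower R hR N hN hNR f hf z.1 z.2
            (abs_le.mpr ⟨hz1.1, hz1.2⟩) (abs_le.mpr ⟨hz2.1, hz2.2⟩)
          calc ‖(c0:ℂ)‖ = c0 := by rw [Complex.norm_real, Real.norm_of_nonneg hc00.le]
            _ ≤ ‖extOp (fun ω => (f ω : ℂ)) (z.1, z.2)‖ := hbnd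
            _ = ‖extOp (fun ω => (f ω : ℂ)) z‖ := by rw [Prod.mk.eta]
      _ ≤ eLpNorm (extOp (fun ω => (f ω : ℂ))) (ENNReal.ofReal p)
            (volume.restrict (Metric.ball (0:ℝ×ℝ) R)) :=
          eLpNorm_mono_measure _ (Measure.restrict_mono hsub le_rfl)

end
end

section
/- Let R ≥ 1 and let x₁, x₂, x₃, x₄ ∈ [-1,1] satisfy |x₁ + x₂ − x₃ − x₄| ≤ 2R^{-1} and |x₁² + x₂² − x₃² − x₄²| ≤ 2R^{-1}. Then min{|x₁ − x₃|, |x₂ − x₃|} ≤ 3R^{-1/2}. -/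
open Real Set

/-- **Arithmetic lemma from the `p = 4` argument** (Section 4 of the paper): if
`x₁, x₂, x₃, x₄ ∈ [-1,1]` satisfy `|x₁ + x₂ - x₃ - x₄| ≤ 2R⁻¹` and
`|x₁² + x₂² - x₃² - x₄²| ≤ 2R⁻¹` with `R ≥ 1`, then
`min(|x₁ - x₃|, |x₂ - x₃|) ≤ 3R^{-1/2}`. -/
theorem near_parabola_pairs (R x₁ x₂ x₃ x₄ : ℝ) (hR : 1 ≤ R)
    (h₁ : x₁ ∈ Icc (-1 : ℝ) 1) (h₂ : x₂ ∈ Icc (-1 : ℝ) 1)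
    (h₃ : x₃ ∈ Icc (-1 : ℝ) 1) (h₄ : x₄ ∈ Icc (-1 : ℝ) 1)
    (hsum : |x₁ + x₂ - x₃ - x₄| ≤ 2 * R⁻¹)
    (hsq : |x₁ ^ 2 + x₂ ^ 2 - x₃ ^ 2 - x₄ ^ 2| ≤ 2 * R⁻¹) :
    min |x₁ - x₃| |x₂ - x₃| ≤ 3 * R ^ (-(1 : ℝ) / 2) := by
  obtain ⟨h1l, h1r⟩ := h₁
  obtain ⟨h2l, h2r⟩ := h₂
  obtain ⟨h3l, h3r⟩ := h₃
  obtain ⟨h4l, h4r⟩ := h₄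
  have hR0 : (0 : ℝ) < R := lt_of_lt_of_le one_pos hR
  set t : ℝ := R ^ (-(1 : ℝ) / 2) with ht
  have ht0 : 0 < t := Real.rpow_pos_of_pos hR0 _
  have htt : t * t = R⁻¹ := by
    rw [ht, ← Real.rpow_add hR0]
    norm_num [Real.rpow_neg_one]
  -- key product bound : |(x₁-x₃)(x₂-x₃)| ≤ 5/R
  have hprod : |(x₁ - x₃) * (x₂ - x₃)| ≤ 5 * R⁻¹ := by
    have key : 2 * ((x₁ - x₃) * (x₂ - x₃)) =
        -(x₁ ^ 2 + x₂ ^ 2 - x₃ ^ 2 - x₄ ^ 2)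
        + (x₁ + x₂ - x₃ - x₄) * (x₁ + x₂ - x₃ + x₄) := by ring
    have h4abs : |x₁ + x₂ - x₃ + x₄| ≤ 4 := by
      rw [abs_le]; constructor <;> linarith
    have h2 : |(x₁ + x₂ - x₃ - x₄) * (x₁ + x₂ - x₃ + x₄)| ≤ 2 * R⁻¹ * 4 := by
      rw [abs_mul]
      exact mul_le_mul hsum h4abs (abs_nonneg _) (by positivity)
    have := abs_add_le (-(x₁ ^ 2 + x₂ ^ 2 - x₃ ^ 2 - x₄ ^ 2))
        ((x₁ + x₂ - x₃ - x₄) * (x₁ + x₂ - x₃ + x₄))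
    rw [← key, abs_neg] at this
    have h2abs : |2 * ((x₁ - x₃) * (x₂ - x₃))| = 2 * |(x₁ - x₃) * (x₂ - x₃)| := by
      rw [abs_mul]; norm_num
    rw [h2abs] at this
    linarith
  set m : ℝ := min |x₁ - x₃| |x₂ - x₃| with hm
  have hm0 : 0 ≤ m := le_min (abs_nonneg _) (abs_nonneg _)
  have hmsq : m * m ≤ 5 * R⁻¹ := by
    calc m * m ≤ |x₁ - x₃| * |x₂ - x₃| :=
          mul_le_mul (min_le_left _ _) (min_le_right _ _) hm0 (abs_nonneg _)
      _ = |(x₁ - x₃) * (x₂ - x₃)| := (abs_mul _ _).symm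
      _ ≤ 5 * R⁻¹ := hprod
  nlinarith [htt, ht0.le, hm0, mul_pos ht0 ht0]
end
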